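/- Fix a 3-CNF formula Φ with p variables and q clauses and a role function Q : Fin p → Bool. In the sequential version of the BR-reduction election, where the nominee of variable party k (i.e., the value σ k) is chosen at stage k — by the distinguished voter i⋆ if Q k = true and by an adversary if Q k = false, each observing all earlier nominees — the voter i⋆ has a strategy guaranteeing that the general-election winner is x⊤ against every adversary behaviour (i.e., there is a family f_k : (Fin k → Bool) → Bool for the stages with Q k = true such that every assignment σ consistent with f has winner(σ) = x⊤) if and only if the quantified formula T_Q(σ satisfies Φ) is true. (Correctness of the PSPACE-hardness reduction for SeqDS-≥U.) -/

import Mathlib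

/-! Common framework: 3-CNF formulas and the BR-reduction election. -/

/-- A literal over `p` variables: a variable index together with a polarity. -/
abbrev Lit (p : ℕ) := Fin p × Bool

/-- A 3-clause: a triple of literals. -/
abbrev Clause3 (p : ℕ) := Lit p × Lit p × Lit p

/-- A 3-CNF formula: a finite list of 3-clauses. -/
abbrev CNF3 (p : ℕ) := List (Clause3 p)

/-- A literal `(k, ε)` is true under assignment `σ` iff `σ k = ε`. -/
def litTrue {p : ℕ} (σ : Fin p → Bool) (l : Lit p) : Bool := σ l.1 == l.2

/-- An assignment satisfies a clause iff some literal of the clause is true. -/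
def satClause {p : ℕ} (σ : Fin p → Bool) (c : Clause3 p) : Bool :=
  litTrue σ c.1 || litTrue σ c.2.1 || litTrue σ c.2.2

/-- An assignment satisfies a 3-CNF formula iff it satisfies every clause. -/
def Satisfies {p : ℕ} (σ : Fin p → Bool) (Φ : CNF3 p) : Prop :=
  ∀ c ∈ Φ, satClause σ c = true

/-- Candidates of the BR-reduction election: the `2p` literals plus the
two anchor candidates `x⊤ = Sum.inr true` and `x⊥ = Sum.inr false`. -/
abbrev Cand (p : ℕ) := Lit p ⊕ Bool

/-- The anchor candidate `x⊤`. -/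
def xTop (p : ℕ) : Cand p := Sum.inr true

/-- The anchor candidate `x⊥`. -/
def xBot (p : ℕ) : Cand p := Sum.inr false

instance {p : ℕ} : Nonempty (Cand p) := ⟨Sum.inr true⟩

/-- The first literal of a clause (in listed order) that is true under `σ`. -/
def firstTrueLit {p : ℕ} (σ : Fin p → Bool) (c : Clause3 p) : Option (Lit p) :=
  if litTrue σ c.1 then some c.1
  else if litTrue σ c.2.1 then some c.2.1
  else if litTrue σ c.2.2 then some c.2.2
  else none

/-- The general-election tally of the BR-reduction election for `Φ` under the
assignment `σ`: `x⊤` gets `q + 2` votes, `x⊥` gets `q + 1` plus one vote per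
falsified clause, and each satisfied clause contributes one vote to its first
true literal. -/
def tally {p : ℕ} (Φ : CNF3 p) (σ : Fin p → Bool) : Cand p → ℕ
  | Sum.inr true => Φ.length + 2
  | Sum.inr false => (Φ.length + 1) + (Φ.filter (fun c => !(satClause σ c))).length
  | Sum.inl l => (Φ.filter (fun c => decide (firstTrueLit σ c = some l))).length

open Classical in
/-- The FPTP winner with respect to the tie-breaking linear order `r`:
the `r`-least candidate among the candidates maximizing the tally `t`. -/
noncomputable def fptpWinner {A : Type*} [Fintype A] [Nonempty A]
    (r : LinearOrder A) (t : A → ℕ) : A :=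
  @Finset.min' A r (Finset.univ.filter fun a => ∀ b, t b ≤ t a) (by
    obtain ⟨a, -, ha⟩ := Finset.exists_max_image (Finset.univ : Finset A) t
      ⟨Classical.arbitrary A, Finset.mem_univ _⟩
    exact ⟨a, Finset.mem_filter.mpr ⟨Finset.mem_univ _, fun b => ha b (Finset.mem_univ _)⟩⟩)

/-- The general-election winner of the BR-reduction election under assignment `σ`,
with tie-breaking order `r`. -/
noncomputable def geWinner {p : ℕ} (Φ : CNF3 p) (r : LinearOrder (Cand p))
    (σ : Fin p → Bool) : Cand p :=
  fptpWinner r (tally Φ σ)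

/-- The quantified formula `T_Q(ψ)`: stage `k` contributes `∃ x_k` if
`Q k = true` and `∀ x_k` if `Q k = false`, applied in increasing order of `k`. -/
def TQ : (p : ℕ) → (Fin p → Bool) → ((Fin p → Bool) → Prop) → Prop
  | 0, _, ψ => ψ (fun k => k.elim0)
  | p + 1, Q, ψ =>
    if Q 0 then
      ∃ b : Bool, TQ p (fun k => Q k.succ) (fun σ => ψ (Fin.cons b σ))
    else
      ∀ b : Bool, TQ p (fun k => Q k.succ) (fun σ => ψ (Fin.cons b σ))

/-- An assignment `σ` is consistent with the existential player's strategy `f`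
iff at every existential stage `k` (i.e. `Q k = true`), `σ k` equals `f k`
applied to the restriction of `σ` to the indices smaller than `k`. -/
def Consistent {p : ℕ} (Q : Fin p → Bool)
    (f : ∀ k : Fin p, (Fin (k : ℕ) → Bool) → Bool) (σ : Fin p → Bool) : Prop :=
  ∀ k : Fin p, Q k = true →
    σ k = f k (fun j => σ ⟨(j : ℕ), lt_trans j.isLt k.isLt⟩)

/-!
`x⊤` gets `q + 2` votes, every literal at most `q`, and `x⊥` gets `q + 1` plus the number of
falsified clauses. So `x⊤` is the unique maximum when `σ` satisfies `Φ`, and otherwise `x⊥`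
reaches at least `q + 2` and beats `x⊤` outright or on the tie-break. The election game is
therefore the evaluation game of `T_Q(Φ)`, and strategies for it correspond to the quantifier
prefix by induction on the number of stages: a strategy is a first move together with one
residual strategy per value of the first variable.
-/

section Election

variable {A : Type*} [Fintype A] [Nonempty A] (r : LinearOrder A) (t : A → ℕ)

theorem le_tally_fptpWinner (b : A) : t b ≤ t (fptpWinner r t) := by
  classical
  unfold fptpWinner
  generalize_proofs hne
  exact (Finset.mem_filter.mp (Finset.min'_mem _ hne)).2 b

theorem fptpWinner_le {a : A} (ha : ∀ b, t b ≤ t a) : r.le (fptpWinner r t) a := by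
  classical
  unfold fptpWinner
  exact Finset.min'_le _ _ (Finset.mem_filter.mpr ⟨Finset.mem_univ a, ha⟩)

theorem fptpWinner_eq_of_forall_lt {a : A} (ha : ∀ b ≠ a, t b < t a) : fptpWinner r t = a := by
  by_contra hne
  exact (ha _ hne).not_ge (le_tally_fptpWinner r t a)

theorem fptpWinner_ne_of_lt {a c : A} (hc : ∀ b, t b ≤ t c) (hca : r.lt c a) :
    fptpWinner r t ≠ a := by
  let _ := r
  rintro rfl
  exact (fptpWinner_le r t hc).not_gt hca

end Election

section Tally

variable {p : ℕ} (Φ : CNF3 p) (σ : Fin p → Bool)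

theorem tally_inl_le (l : Lit p) : tally Φ σ (Sum.inl l) ≤ Φ.length :=
  List.length_filter_le _ _

theorem satisfies_iff_falsified_eq_nil :
    Satisfies σ Φ ↔ Φ.filter (fun c => !(satClause σ c)) = [] := by
  simp [Satisfies, List.filter_eq_nil_iff]

theorem tally_lt_tally_xTop (h : Satisfies σ Φ) {a : Cand p} (ha : a ≠ xTop p) :
    tally Φ σ a < tally Φ σ (xTop p) := by
  rw [satisfies_iff_falsified_eq_nil] at h
  rcases a with l | _ | _
  · have := tally_inl_le Φ σ l
    show _ < Φ.length + 2
    omega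
  · simp [tally, xTop, h]
  · exact absurd rfl ha

theorem tally_le_tally_xBot (h : ¬ Satisfies σ Φ) (b : Cand p) :
    tally Φ σ b ≤ tally Φ σ (xBot p) := by
  rw [satisfies_iff_falsified_eq_nil, ← Ne, ← List.length_pos_iff] at h
  have hb : Φ.length + 2 ≤ tally Φ σ (xBot p) := by simp only [tally, xBot]; omega
  rcases b with l | _ | _
  · exact (tally_inl_le Φ σ l).trans (by omega)
  · exact le_rfl
  · exact hb

theorem geWinner_eq_xTop_iff (r : LinearOrder (Cand p)) (hr : r.lt (xBot p) (xTop p)) :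
    geWinner Φ r σ = xTop p ↔ Satisfies σ Φ := by
  refine ⟨fun hw => ?_, fun h => fptpWinner_eq_of_forall_lt r _ fun a => tally_lt_tally_xTop Φ σ h⟩
  by_contra h
  exact fptpWinner_ne_of_lt r _ (tally_le_tally_xBot Φ σ h) hr hw

end Tally

/-- Strategy of the existential player: the move at stage `k` as a function of the first `k`
moves. Its values at universal stages are never consulted. -/
abbrev Strategy (p : ℕ) := ∀ k : Fin p, (Fin (k : ℕ) → Bool) → Bool

namespace Strategy

variable {p : ℕ}

def residual (f : Strategy (p + 1)) (b : Bool) : Strategy p :=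
  fun k τ => f k.succ (Fin.cons b τ)

/-- Play `b₀` at stage `0` and continue with `F b` once the first move is `b`. -/
def cons (b₀ : Bool) (F : Bool → Strategy p) : Strategy (p + 1) :=
  Fin.cases (motive := fun k => (Fin (k : ℕ) → Bool) → Bool)
    (fun _ => b₀) (fun k τ => F (τ ⟨0, k.succ_pos⟩) k (fun j => τ j.succ))

end Strategy

theorem consistent_cons_iff {p : ℕ} (Q : Fin (p + 1) → Bool) (f : Strategy (p + 1))
    (b : Bool) (σ : Fin p → Bool) :
    Consistent Q f (Fin.cons b σ) ↔
      (Q 0 = true → b = f 0 Fin.elim0) ∧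
        Consistent (fun k => Q k.succ) (f.residual b) σ := by
  have restrict_cons (k : Fin p) :
      (fun j : Fin (k + 1) => (Fin.cons b σ : Fin (p + 1) → Bool) ⟨j, by omega⟩) =
        Fin.cons b fun j : Fin k => σ ⟨j, by omega⟩ := by
    funext j
    exact Fin.cases rfl (fun _ => rfl) j
  simp only [Consistent, Fin.forall_fin_succ, Fin.cons_zero, Fin.cons_succ]
  refine and_congr (imp_congr_right fun _ => ?_) (forall_congr' fun k => ?_)
  · exact iff_of_eq (congrArg _ (congrArg _ (funext fun j => j.elim0)))
  · rw [Strategy.residual, ← restrict_cons]; rfl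

section Guarantees

variable {p : ℕ}

def Guarantees (Q : Fin p → Bool) (f : Strategy p) (ψ : (Fin p → Bool) → Prop) : Prop :=
  ∀ σ, Consistent Q f σ → ψ σ

theorem Guarantees.residual {Q : Fin (p + 1) → Bool} {f : Strategy (p + 1)}
    {ψ : (Fin (p + 1) → Bool) → Prop} (h : Guarantees Q f ψ) {b : Bool}
    (hb : Q 0 = true → b = f 0 Fin.elim0) :
    Guarantees (fun k => Q k.succ) (f.residual b) (fun σ => ψ (Fin.cons b σ)) :=
  fun σ hσ => h _ ((consistent_cons_iff Q f b σ).mpr ⟨hb, hσ⟩)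

theorem guarantees_cons {Q : Fin (p + 1) → Bool} {ψ : (Fin (p + 1) → Bool) → Prop}
    {b₀ : Bool} {F : Bool → Strategy p}
    (hF : ∀ b, (Q 0 = true → b = b₀) →
      Guarantees (fun k => Q k.succ) (F b) (fun σ => ψ (Fin.cons b σ))) :
    Guarantees Q (Strategy.cons b₀ F) ψ := by
  intro σ hσ
  rw [← Fin.cons_self_tail σ] at hσ ⊢
  obtain ⟨h0, htail⟩ := (consistent_cons_iff Q _ _ _).mp hσ
  exact hF _ h0 _ htail

theorem exists_guarantees_iff_TQ :
    ∀ {p : ℕ} (Q : Fin p → Bool) (ψ : (Fin p → Bool) → Prop),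
      (∃ f, Guarantees Q f ψ) ↔ TQ p Q ψ
  | 0, Q, ψ =>
    ⟨fun ⟨_, hf⟩ => hf _ fun k => k.elim0,
      fun h => ⟨fun k => k.elim0, fun σ _ => Subsingleton.elim (fun k => k.elim0) σ ▸ h⟩⟩
  | p + 1, Q, ψ => by
    simp only [TQ, ← exists_guarantees_iff_TQ]
    split_ifs with hQ
    · constructor
      · rintro ⟨f, hf⟩
        exact ⟨f 0 Fin.elim0, _, hf.residual fun _ => rfl⟩
      · rintro ⟨b₀, g, hg⟩
        exact ⟨Strategy.cons b₀ fun _ => g, guarantees_cons fun b hb => hb hQ ▸ hg⟩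
    · constructor
      · rintro ⟨f, hf⟩ b
        exact ⟨_, hf.residual (b := b) fun h => absurd h hQ⟩
      · intro h
        choose F hF using h
        exact ⟨Strategy.cons true F, guarantees_cons fun b _ => hF b⟩

end Guarantees

/-- correctness of the PSPACE-hardness reduction for SeqDS-≥U.
In the sequential BR-reduction election, where the nominee `σ k` of variable
party `k` is chosen at stage `k` by `i⋆` if `Q k = true` and by the adversary
if `Q k = false` (each observing all earlier nominees), the voter `i⋆` has a
strategy guaranteeing that the general-election winner is `x⊤` against every
adversary behaviour iff the quantified formula `T_Q(σ satisfies Φ)` is true. -/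
theorem stmt8 {p : ℕ} (Φ : CNF3 p) (Q : Fin p → Bool)
    (r : LinearOrder (Cand p)) (hr : r.lt (xBot p) (xTop p)) :
    (∃ f : ∀ k : Fin p, (Fin (k : ℕ) → Bool) → Bool,
        ∀ σ : Fin p → Bool, Consistent Q f σ → geWinner Φ r σ = xTop p) ↔
      TQ p Q (fun σ => Satisfies σ Φ) := by
  rw [← exists_guarantees_iff_TQ]
  simp only [Guarantees, geWinner_eq_xTop_iff Φ _ r hr]
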